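/- arXiv:2210.10729 — 5 statements merged into one kernel-verified Lean document; each statement's English description precedes it below -/
import Mathlib

section
/- If f : (a,b) → ℝ is such that for every n×n Hermitian matrix M with spectrum in (a,b) and every Hermitian matrix Q, the matrix-valued function t ↦ f(M+tQ) is twice differentiable at t=0 with positive semidefinite second derivative, then f is matrix convex on n×n Hermitian matrices with spectrum in (a,b): for all such A₀, A₁ and λ ∈ (0,1), f((1-λ)A₀ + λA₁) ≤ (1-λ)f(A₀) + λf(A₁) in the Loewner order. -/
open Matrix ComplexOrder

attribute [local instance] Matrix.normedAddCommGroup Matrix.normedSpace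

/-- Functional calculus for Hermitian matrices (returns 0 on non-Hermitian input). -/
noncomputable def matFun {n : Type*} [Fintype n] [DecidableEq n]
    (f : ℝ → ℝ) (A : Matrix n n ℂ) : Matrix n n ℂ :=
  if hA : A.IsHermitian then
    (Matrix.IsHermitian.eigenvectorUnitary hA : Matrix n n ℂ) *
      Matrix.diagonal (fun i => (f (hA.eigenvalues i) : ℂ)) *
      star (Matrix.IsHermitian.eigenvectorUnitary hA : Matrix n n ℂ)
  else 0

/-! Matrix convexity is tested along segments: it suffices that for all Hermitian `A₀, A₁`
with spectrum in `(a, b)` and every vector `x`, the scalar function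
`t ↦ re ⟪x, f(A₀ + t (A₁ - A₀)) x⟫` is convex on `[0, 1]`. The Hermitian matrices with spectrum
in `(a, b)` form a convex set, being cut out by the conditions `A - a > 0` and `b - A > 0`, so the
hypothesis applies at every point of the segment and gives these scalar functions a nonnegative
second derivative on `[0, 1]`. -/

open Set Filter Topology

namespace Matrix

variable {n 𝕜 : Type*} [RCLike 𝕜]

lemma convex_setOf_posDef : Convex ℝ {A : Matrix n n 𝕜 | A.PosDef} := by
  intro A hA B hB s t hs ht hst
  rcases hs.eq_or_lt with rfl | hs
  · simp_all
  · exact (hA.smul hs).add_posSemidef (hB.posSemidef.smul ht)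

variable [Fintype n] [DecidableEq n] {A : Matrix n n 𝕜}

lemma IsHermitian.forall_eigenvalues_mem_iff (hA : A.IsHermitian) {s : Set ℝ} :
    (∀ i, hA.eigenvalues i ∈ s) ↔ spectrum ℝ A ⊆ s := by
  rw [hA.spectrum_real_eq_range_eigenvalues, range_subset_iff]

lemma IsHermitian.posDef_iff_spectrum_subset_Ioi (hA : A.IsHermitian) :
    A.PosDef ↔ spectrum ℝ A ⊆ Ioi 0 := by
  rw [hA.posDef_iff_eigenvalues_pos, ← hA.forall_eigenvalues_mem_iff]
  rfl

lemma IsHermitian.posDef_sub_algebraMap_iff (hA : A.IsHermitian) (a : ℝ) :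
    (A - algebraMap ℝ _ a).PosDef ↔ spectrum ℝ A ⊆ Ioi a := by
  rw [(hA.sub (IsSelfAdjoint.algebraMap _ (.all a))).posDef_iff_spectrum_subset_Ioi,
    ← spectrum.sub_singleton_eq, sub_singleton, image_subset_iff, preimage_sub_const_Ioi,
    zero_add]

lemma IsHermitian.posDef_algebraMap_sub_iff (hA : A.IsHermitian) (b : ℝ) :
    (algebraMap ℝ _ b - A).PosDef ↔ spectrum ℝ A ⊆ Iio b := by
  have hB : (algebraMap ℝ (Matrix n n 𝕜) b - A).IsHermitian :=
    (IsSelfAdjoint.algebraMap _ (.all b)).sub hA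
  rw [hB.posDef_iff_spectrum_subset_Ioi,
    ← spectrum.singleton_sub_eq, singleton_sub, image_subset_iff, preimage_const_sub_Ioi, sub_zero]

lemma IsHermitian.spectrum_subset_Ioo_iff (hA : A.IsHermitian) (a b : ℝ) :
    spectrum ℝ A ⊆ Ioo a b ↔
      (A - algebraMap ℝ _ a).PosDef ∧ (algebraMap ℝ _ b - A).PosDef := by
  rw [hA.posDef_sub_algebraMap_iff, hA.posDef_algebraMap_sub_iff, ← subset_inter_iff,
    Ioi_inter_Iio]

theorem convex_setOf_isHermitian_spectrum_subset_Ioo (a b : ℝ) :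
    Convex ℝ {A : Matrix n n 𝕜 | A.IsHermitian ∧ spectrum ℝ A ⊆ Ioo a b} := by
  rintro A ⟨hA, hAs⟩ B ⟨hB, hBs⟩ s t hs ht hst
  have hC : (s • A + t • B).IsHermitian :=
    ((IsSelfAdjoint.all s).smul hA).add ((IsSelfAdjoint.all t).smul hB)
  have hcombo (C : Matrix n n 𝕜) : s • A + t • B - C = s • (A - C) + t • (B - C) := by
    linear_combination (norm := module) hst • C
  have hcombo' (C : Matrix n n 𝕜) : C - (s • A + t • B) = s • (C - A) + t • (C - B) := by
    linear_combination (norm := module) (-hst) • C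
  rw [hA.spectrum_subset_Ioo_iff] at hAs
  rw [hB.spectrum_subset_Ioo_iff] at hBs
  refine ⟨hC, hC.spectrum_subset_Ioo_iff a b |>.mpr ⟨?_, ?_⟩⟩
  · rw [hcombo]; exact convex_setOf_posDef hAs.1 hBs.1 hs ht hst
  · rw [hcombo']; exact convex_setOf_posDef hAs.2 hBs.2 hs ht hst

end Matrix

section SecondDerivative

variable {E : Type*} [NormedAddCommGroup E] [NormedSpace ℝ E]

lemma Filter.Eventually.hasDerivAt_of_comp_const_add {G G' : ℝ → E} {t₀ : ℝ}
    (h : ∀ᶠ s in 𝓝 0, HasDerivAt (fun s => G (t₀ + s)) (G' s) s) :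
    ∀ᶠ u in 𝓝 t₀, HasDerivAt G (G' (u - t₀)) u := by
  have htendsto : Tendsto (fun u => u - t₀) (𝓝 t₀) (𝓝 0) := by
    simpa using (continuous_sub_right t₀).tendsto t₀
  filter_upwards [htendsto.eventually h] with u hu
  simpa using hu.comp_sub_const u t₀

lemma hasDerivAt_deriv_of_eventually_hasDerivAt {g g' : ℝ → E} {g'' : E} {t : ℝ}
    (h : ∀ᶠ u in 𝓝 t, HasDerivAt g (g' u) u) (h' : HasDerivAt g' g'' t) :
    HasDerivAt (deriv g) g'' t :=
  h'.congr_of_eventuallyEq (h.mono fun _ hu => hu.deriv)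

end SecondDerivative

theorem convexOn_of_eventually_hasDerivAt_of_hasDerivAt_nonneg {D : Set ℝ} (hD : Convex ℝ D)
    {g : ℝ → ℝ}
    (h : ∀ t ∈ D, ∃ (g' : ℝ → ℝ) (g'' : ℝ), (∀ᶠ u in 𝓝 t, HasDerivAt g (g' u) u) ∧
      HasDerivAt g' g'' t ∧ 0 ≤ g'') :
    ConvexOn ℝ D g := by
  choose! g' g'' hg' hg'' hnonneg using h
  have hdiff : ∀ t ∈ D, DifferentiableAt ℝ g t := fun t ht =>
    (hg' t ht).self_of_nhds.differentiableAt
  have hderiv2 : ∀ t ∈ D, HasDerivAt (deriv g) (g'' t) t := fun t ht =>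
    hasDerivAt_deriv_of_eventually_hasDerivAt (hg' t ht) (hg'' t ht)
  refine convexOn_of_deriv2_nonneg hD (fun t ht => (hdiff t ht).continuousAt.continuousWithinAt)
    (fun t ht => (hdiff t (interior_subset ht)).differentiableWithinAt)
    (fun t ht => (hderiv2 t (interior_subset ht)).differentiableAt.differentiableWithinAt)
    fun t ht => ?_
  rw [Function.iterate_succ_apply', Function.iterate_one, (hderiv2 t (interior_subset ht)).deriv]
  exact hnonneg t (interior_subset ht)

namespace Matrix

variable {n 𝕜 : Type*} [Fintype n] [RCLike 𝕜]

noncomputable def reDotProductMulVecCLM (x : n → 𝕜) : Matrix n n 𝕜 →L[ℝ] ℝ :=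
  LinearMap.toContinuousLinearMap
    { toFun := fun M => RCLike.re (star x ⬝ᵥ M *ᵥ x)
      map_add' := fun M N => by simp [add_mulVec, dotProduct_add]
      map_smul' := fun c M => by simp [smul_mulVec, dotProduct_smul, RCLike.smul_re] }

@[simp]
lemma reDotProductMulVecCLM_apply (x : n → 𝕜) (M : Matrix n n 𝕜) :
    reDotProductMulVecCLM x M = RCLike.re (star x ⬝ᵥ M *ᵥ x) := rfl

lemma PosSemidef.of_re_dotProduct_mulVec_nonneg {A : Matrix n n 𝕜} (hA : A.IsHermitian)
    (h : ∀ x, 0 ≤ RCLike.re (star x ⬝ᵥ A *ᵥ x)) : A.PosSemidef :=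
  .of_dotProduct_mulVec_nonneg hA fun x =>
    RCLike.nonneg_iff.mpr ⟨h x, hA.im_star_dotProduct_mulVec_self x⟩

theorem posSemidef_smul_add_smul_sub_of_hasDerivAt_posSemidef {F : ℝ → Matrix n n 𝕜}
    (hF : ∀ t, (F t).IsHermitian)
    (h : ∀ t ∈ Icc (0 : ℝ) 1, ∃ (F' : ℝ → Matrix n n 𝕜) (F'' : Matrix n n 𝕜),
      (∀ᶠ u in 𝓝 t, HasDerivAt F (F' u) u) ∧ HasDerivAt F' F'' t ∧ F''.PosSemidef)
    {l : ℝ} (hl : l ∈ Icc (0 : ℝ) 1) : ((1 - l) • F 0 + l • F 1 - F l).PosSemidef := by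
  have hherm : ((1 - l) • F 0 + l • F 1 - F l).IsHermitian :=
    (((IsSelfAdjoint.all _).smul (hF 0)).add ((IsSelfAdjoint.all _).smul (hF 1))).sub (hF l)
  refine .of_re_dotProduct_mulVec_nonneg hherm fun x => ?_
  set L := reDotProductMulVecCLM x
  have hconv : ConvexOn ℝ (Icc 0 1) (L ∘ F) := by
    refine convexOn_of_eventually_hasDerivAt_of_hasDerivAt_nonneg (convex_Icc 0 1) fun t ht => ?_
    obtain ⟨F', F'', hF', hF'', hpsd⟩ := h t ht
    exact ⟨L ∘ F', L F'', hF'.mono fun u hu => L.hasFDerivAt.comp_hasDerivAt u hu,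
      L.hasFDerivAt.comp_hasDerivAt t hF'', hpsd.re_dotProduct_nonneg x⟩
  have hseg := hconv.2 (left_mem_Icc.mpr zero_le_one) (right_mem_Icc.mpr zero_le_one)
    (sub_nonneg.mpr hl.2) hl.1 (sub_add_cancel 1 l)
  simp only [smul_eq_mul, mul_zero, mul_one, zero_add, Function.comp_apply] at hseg
  have hL : L ((1 - l) • F 0 + l • F 1 - F l) = (1 - l) * L (F 0) + l * L (F 1) - L (F l) := by
    simp only [map_sub, map_add, map_smul, smul_eq_mul]
  rw [← reDotProductMulVecCLM_apply, hL]
  linarith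

end Matrix

lemma isHermitian_matFun {n : Type*} [Fintype n] [DecidableEq n] (f : ℝ → ℝ)
    (A : Matrix n n ℂ) : (matFun f A).IsHermitian := by
  unfold matFun
  split_ifs with hA
  · rw [star_eq_conjTranspose]
    exact isHermitian_mul_mul_conjTranspose _
      (isHermitian_diagonal_iff.mpr fun _ => Complex.conj_ofReal _)
  · exact isHermitian_zero

/-- The local second derivative test: if for every Hermitian `M` with spectrum in `(a,b)` and
every Hermitian `Q` the map `t ↦ f(M + tQ)` is twice differentiable at `0` with positive
semidefinite second derivative, then `f` is matrix convex on Hermitian matrices with spectrum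
in `(a,b)`. -/
theorem matrix_convexity_of_local_second_derivative_test {n : ℕ} (a b : ℝ) (f : ℝ → ℝ)
    (h : ∀ (M Q : Matrix (Fin n) (Fin n) ℂ) (hM : M.IsHermitian), Q.IsHermitian →
      (∀ i, hM.eigenvalues i ∈ Set.Ioo a b) →
      ∃ (D : ℝ → Matrix (Fin n) (Fin n) ℂ) (D2 : Matrix (Fin n) (Fin n) ℂ),
        (∀ᶠ t in nhds (0 : ℝ), HasDerivAt (fun s : ℝ => matFun f (M + s • Q)) (D t) t) ∧
        HasDerivAt D D2 0 ∧ D2.PosSemidef) :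
    ∀ (A₀ A₁ : Matrix (Fin n) (Fin n) ℂ) (h₀ : A₀.IsHermitian) (h₁ : A₁.IsHermitian),
      (∀ i, h₀.eigenvalues i ∈ Set.Ioo a b) → (∀ i, h₁.eigenvalues i ∈ Set.Ioo a b) →
      ∀ l : ℝ, l ∈ Set.Ioo (0 : ℝ) 1 →
        ((1 - l) • matFun f A₀ + l • matFun f A₁
          - matFun f ((1 - l) • A₀ + l • A₁)).PosSemidef := by
  intro A₀ A₁ h₀ h₁ hs₀ hs₁ l hl
  have hF : ∀ t ∈ Icc (0 : ℝ) 1,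
      ∃ (F' : ℝ → Matrix (Fin n) (Fin n) ℂ) (F'' : Matrix (Fin n) (Fin n) ℂ),
      (∀ᶠ u in 𝓝 t, HasDerivAt (fun t => matFun f (A₀ + t • (A₁ - A₀))) (F' u) u) ∧
        HasDerivAt F' F'' t ∧ F''.PosSemidef := by
    intro t ht
    have hspec := convex_setOf_isHermitian_spectrum_subset_Ioo (n := Fin n) (𝕜 := ℂ) a b
    obtain ⟨hM, hMs⟩ := hspec.add_smul_sub_mem (x := A₀) (y := A₁)
      ⟨h₀, h₀.forall_eigenvalues_mem_iff.mp hs₀⟩ ⟨h₁, h₁.forall_eigenvalues_mem_iff.mp hs₁⟩ ht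
    obtain ⟨D, D2, hD, hD2, hpsd⟩ :=
      h _ _ hM (h₁.sub h₀) (hM.forall_eigenvalues_mem_iff.mpr hMs)
    refine ⟨fun u => D (u - t), D2, Eventually.hasDerivAt_of_comp_const_add ?_, ?_, hpsd⟩
    · -- `hD` carries the default instances on matrices, not the normed ones: `simpa` fails here
      simp only [add_assoc, ← add_smul] at hD
      exact hD
    · exact HasDerivAt.comp_sub_const t t (by rwa [sub_self])
  have hloewner := posSemidef_smul_add_smul_sub_of_hasDerivAt_posSemidef
    (fun _ => isHermitian_matFun f _) hF (Ioo_subset_Icc_self hl)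
  rw [zero_smul, add_zero, one_smul, add_sub_cancel] at hloewner
  rwa [show (1 - l) • A₀ + l • A₁ = A₀ + l • (A₁ - A₀) by module]
end

section
/- For any u ∈ ℝ, the function A ↦ (u·I - A)⁻¹ is matrix convex on Hermitian matrices with spectrum in (-∞, u). -/
/-!
Write `B = uI - A`. The eigenvalue hypothesis makes `B` positive definite, and `A ↦ uI - A` is
affine, so the claim is the operator convexity of `B ↦ B⁻¹` on positive definite matrices, which
holds in every C⋆-algebra (`CStarAlgebra.convexOn_ringInverse`); with the L2 operator norm and
the Loewner order, complex matrices are one.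
-/

open Matrix ComplexOrder
open scoped Matrix.Norms.L2Operator MatrixOrder

theorem Matrix.IsHermitian.posDef_smul_one_sub {𝕜 n : Type*} [RCLike 𝕜] [Fintype n]
    [DecidableEq n] {A : Matrix n n 𝕜} (hA : A.IsHermitian) {u : ℝ}
    (hu : ∀ i, hA.eigenvalues i < u) : ((u : 𝕜) • 1 - A).PosDef := by
  have hconj : (u : 𝕜) • 1 - A = Unitary.conjStarAlgAut 𝕜 _ hA.eigenvectorUnitary
      (diagonal fun i => ((u - hA.eigenvalues i : ℝ) : 𝕜)) := by
    conv_lhs => rw [hA.spectral_theorem]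
    rw [← map_one (Unitary.conjStarAlgAut 𝕜 _ hA.eigenvectorUnitary), ← map_smul, ← map_sub,
      smul_one_eq_diagonal, diagonal_sub]
    push_cast
    rfl
  rw [hconj, Unitary.conjStarAlgAut_apply,
    IsUnit.posDef_star_right_conjugate_iff Unitary.isUnit_coe, posDef_diagonal_iff]
  simpa using hu

theorem Matrix.PosDef.inv_convexComb_le {n : Type*} [Fintype n] [DecidableEq n]
    {B₀ B₁ : Matrix n n ℂ} (h₀ : B₀.PosDef) (h₁ : B₁.PosDef) {a b : ℝ}
    (ha : 0 ≤ a) (hb : 0 ≤ b) (hab : a + b = 1) :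
    (a • B₀ + b • B₁)⁻¹ ≤ a • B₀⁻¹ + b • B₁⁻¹ := by
  simpa only [nonsing_inv_eq_ringInverse] using
    CStarAlgebra.convexOn_ringInverse.2 h₀.isStrictlyPositive h₁.isStrictlyPositive ha hb hab

/-- For `u ∈ ℝ`, the map `A ↦ (uI - A)⁻¹` is matrix convex on Hermitian matrices with
spectrum in `(-∞, u)`. -/
theorem resolvent_matrix_convex_below {n : ℕ} (u : ℝ)
    (A₀ A₁ : Matrix (Fin n) (Fin n) ℂ) (h₀ : A₀.IsHermitian) (h₁ : A₁.IsHermitian)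
    (he₀ : ∀ i, h₀.eigenvalues i < u) (he₁ : ∀ i, h₁.eigenvalues i < u)
    (l : ℝ) (hl : l ∈ Set.Ioo (0 : ℝ) 1) :
    ((1 - l) • ((u : ℂ) • 1 - A₀)⁻¹ + l • ((u : ℂ) • 1 - A₁)⁻¹
      - ((u : ℂ) • 1 - ((1 - l) • A₀ + l • A₁))⁻¹).PosSemidef := by
  have haffine : (u : ℂ) • 1 - ((1 - l) • A₀ + l • A₁)
      = (1 - l) • ((u : ℂ) • 1 - A₀) + l • ((u : ℂ) • 1 - A₁) := by
    module
  rw [haffine]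
  exact le_iff.mp <| (h₀.posDef_smul_one_sub he₀).inv_convexComb_le
    (h₁.posDef_smul_one_sub he₁) (sub_nonneg.mpr hl.2.le) hl.1.le (sub_add_cancel 1 l)
end

section
/- Parallel sum concavity (Anderson–Duffin): the map (A, B) ↦ (A⁻¹ + B⁻¹)⁻¹ is jointly concave on pairs of positive definite Hermitian matrices: for positive definite A₀, A₁, B₀, B₁ and λ ∈ (0,1), ((A_λ)⁻¹ + (B_λ)⁻¹)⁻¹ ≥ (1-λ)(A₀⁻¹+B₀⁻¹)⁻¹ + λ(A₁⁻¹+B₁⁻¹)⁻¹, where A_λ = (1-λ)A₀ + λA₁ and B_λ = (1-λ)B₀ + λB₁. -/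
/-!
Completing the square shows that the parallel sum `(A⁻¹ + B⁻¹)⁻¹` is the Loewner-least value of
`(1 - C)ᴴ A (1 - C) + Cᴴ B C` over all `C`, attained at `C = (A + B)⁻¹ A`. For fixed `C` this
expression is affine in `(A, B)`, so evaluating it at the minimiser for `(A_λ, B_λ)` bounds the
parallel sum of `(A_λ, B_λ)` from below by the convex combination of the parallel sums.
-/

open Matrix ComplexOrder

namespace Matrix

variable {n K : Type*} [Fintype n] [DecidableEq n]

section Algebra

variable [CommRing K]

noncomputable def parallelSum (A B : Matrix n n K) : Matrix n n K := (A⁻¹ + B⁻¹)⁻¹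

/-- The quadratic form `x ↦ ⟪A (x - C x), x - C x⟫ + ⟪B (C x), C x⟫` of the splitting
`x = (x - C x) + C x`. -/
def splitForm [StarRing K] (A B C : Matrix n n K) : Matrix n n K :=
  (1 - C)ᴴ * A * (1 - C) + Cᴴ * B * C

theorem parallelSum_eq_mul_inv_add_mul {A B : Matrix n n K} (hA : IsUnit A) (hB : IsUnit B) :
    parallelSum A B = B * (A + B)⁻¹ * A := by
  have hAdet := (isUnit_iff_isUnit_det A).mp hA
  have hBdet := (isUnit_iff_isUnit_det B).mp hB
  have h : A⁻¹ + B⁻¹ = A⁻¹ * (A + B) * B⁻¹ := by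
    rw [mul_add, add_mul, nonsing_inv_mul A hAdet, one_mul, mul_assoc, mul_nonsing_inv B hBdet,
      mul_one, add_comm]
  rw [parallelSum, h, mul_inv_rev, mul_inv_rev, nonsing_inv_nonsing_inv A hAdet,
    nonsing_inv_nonsing_inv B hBdet, mul_assoc]

theorem splitForm_sub_parallelSum [StarRing K] {A B : Matrix n n K}
    (hA : A.IsHermitian) (hB : B.IsHermitian) (hA' : IsUnit A) (hB' : IsUnit B)
    (hAB : IsUnit (A + B)) (C : Matrix n n K) :
    splitForm A B C - parallelSum A B
      = (C - (A + B)⁻¹ * A)ᴴ * (A + B) * (C - (A + B)⁻¹ * A) := by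
  have hSdet := (isUnit_iff_isUnit_det (A + B)).mp hAB
  have hT : ((A + B)⁻¹)ᴴ = (A + B)⁻¹ := (hA.add hB).inv
  have hST := mul_nonsing_inv (A + B) hSdet
  have hTS := nonsing_inv_mul (A + B) hSdet
  rw [parallelSum_eq_mul_inv_add_mul hA' hB', splitForm]
  generalize (A + B)⁻¹ = T at hT hST hTS
  have hBTA : B * T * A = A - A * T * A := by
    rw [eq_sub_iff_add_eq, ← add_mul, ← add_mul, add_comm, hST, one_mul]
  have hsq : (C - T * A)ᴴ * (A + B) * (C - T * A)
      = Cᴴ * (A + B) * C - Cᴴ * ((A + B) * T) * A - A * (T * (A + B)) * C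
        + A * (T * (A + B)) * (T * A) := by
    simp only [conjTranspose_sub, conjTranspose_mul, hA.eq, hT]
    noncomm_ring
  rw [hsq, hST, hTS, hBTA, conjTranspose_sub, conjTranspose_one]
  noncomm_ring

theorem splitForm_smul_add_smul [StarRing K] {R : Type*} [Monoid R] [DistribMulAction R K]
    [SMulCommClass R K K] [IsScalarTower R K K] (a b : R) (A₀ A₁ B₀ B₁ C : Matrix n n K) :
    splitForm (a • A₀ + b • A₁) (a • B₀ + b • B₁) C
      = a • splitForm A₀ B₀ C + b • splitForm A₁ B₁ C := by
  simp only [splitForm, Matrix.mul_add, Matrix.add_mul, Matrix.mul_smul, Matrix.smul_mul, smul_add]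
  abel

end Algebra

namespace PosDef

variable [Field K] [PartialOrder K] [AddLeftMono K] [StarRing K] {A B : Matrix n n K}

theorem posSemidef_splitForm_sub_parallelSum (hA : A.PosDef) (hB : B.PosDef) (C : Matrix n n K) :
    (splitForm A B C - parallelSum A B).PosSemidef := by
  rw [splitForm_sub_parallelSum hA.isHermitian hB.isHermitian hA.isUnit hB.isUnit
    (hA.add hB).isUnit]
  exact (hA.add hB).posSemidef.conjTranspose_mul_mul_same _

theorem parallelSum_eq_splitForm (hA : A.PosDef) (hB : B.PosDef) :
    parallelSum A B = splitForm A B ((A + B)⁻¹ * A) := by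
  have h := splitForm_sub_parallelSum hA.isHermitian hB.isHermitian hA.isUnit hB.isUnit
    (hA.add hB).isUnit ((A + B)⁻¹ * A)
  rw [sub_self, conjTranspose_zero, Matrix.zero_mul, Matrix.zero_mul, sub_eq_zero] at h
  exact h.symm

end PosDef

end Matrix

/-- Anderson–Duffin: the parallel sum `(A, B) ↦ (A⁻¹ + B⁻¹)⁻¹` is jointly concave on pairs of
positive definite Hermitian matrices, in the Loewner order. -/
theorem parallel_sum_jointly_concave {n : ℕ}
    (A₀ A₁ B₀ B₁ : Matrix (Fin n) (Fin n) ℂ)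
    (hA₀ : A₀.PosDef) (hA₁ : A₁.PosDef) (hB₀ : B₀.PosDef) (hB₁ : B₁.PosDef)
    (l : ℝ) (hl : l ∈ Set.Ioo (0 : ℝ) 1) :
    ((((1 - l) • A₀ + l • A₁)⁻¹ + ((1 - l) • B₀ + l • B₁)⁻¹)⁻¹
      - ((1 - l) • (A₀⁻¹ + B₀⁻¹)⁻¹ + l • (A₁⁻¹ + B₁⁻¹)⁻¹)).PosSemidef := by
  obtain ⟨hl₀, hl₁⟩ := hl
  rw [← sub_pos] at hl₁
  have hA := (hA₀.smul hl₁).add (hA₁.smul hl₀)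
  have hB := (hB₀.smul hl₁).add (hB₁.smul hl₀)
  show (parallelSum _ _ - ((1 - l) • parallelSum A₀ B₀ + l • parallelSum A₁ B₁)).PosSemidef
  rw [hA.parallelSum_eq_splitForm hB, splitForm_smul_add_smul, add_sub_add_comm, ← smul_sub,
    ← smul_sub]
  exact ((hA₀.posSemidef_splitForm_sub_parallelSum hB₀ _).smul hl₁.le).add
    ((hA₁.posSemidef_splitForm_sub_parallelSum hB₁ _).smul hl₀.le)
end

section
/- The integral representation of fractional powers: for positive reals a₁, …, a_k and positive exponents p₁, …, p_k with Σ p_j = 1, one has a₁^{p₁} ⋯ a_k^{p_k} = C⁻¹ ∫_{(0,∞)^{k-1}} (a₁⁻¹ + u₂ a₂⁻¹ + ⋯ + u_k a_k⁻¹)⁻¹ ∏_{j=2}^k u_j^{p_j - 1} du_j, where C = ∏_{j=1}^k Γ(p_j) (equivalently C = ∫ (1 + u₂ + ⋯ + u_k)⁻¹ ∏ u_j^{p_j-1} du_j). -/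
open MeasureTheory Finset

/-! Write `λ⁻¹ = ∫₀^∞ e^{-λt} dt` for `λ = a₁⁻¹ + Σ_{j≥2} u_j a_j⁻¹` and exchange the order of
integration (Tonelli). For fixed `t` the integral over `u` factorises into the one-dimensional
Gamma integrals `∫₀^∞ u^{p_j-1} e^{-t u / a_j} du = Γ(p_j) (a_j / t)^{p_j}`, whose product is
`t^{p₁-1} ∏_{j≥2} Γ(p_j) a_j^{p_j}` because `Σ_{j≥2} p_j = 1 - p₁`; the remaining integral
`∫₀^∞ t^{p₁-1} e^{-t/a₁} dt = Γ(p₁) a₁^{p₁}` finishes the computation. -/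

open Set Real

theorem one_div_rpow_mul_Gamma_nonneg {b q : ℝ} (hb : 0 ≤ b) (hq : 0 ≤ q) :
    0 ≤ (1 / b) ^ q * Gamma q :=
  mul_nonneg (rpow_nonneg (one_div_nonneg.2 hb) _) (Gamma_nonneg_of_nonneg hq)

theorem integrableOn_rpow_mul_exp_neg_mul_Ioi {s c : ℝ} (hs : 0 < s) (hc : 0 < c) :
    IntegrableOn (fun x : ℝ => x ^ (s - 1) * exp (-(c * x))) (Ioi 0) := by
  simpa only [rpow_one, neg_mul] using
    integrableOn_rpow_mul_exp_neg_mul_rpow (p := 1) (by linarith) one_pos hc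

theorem ae_restrict_Ioi_rpow_mul_exp_nonneg (s c : ℝ) :
    0 ≤ᵐ[volume.restrict (Ioi 0)] fun x : ℝ => x ^ (s - 1) * exp (-(c * x)) := by
  filter_upwards [self_mem_ae_restrict measurableSet_Ioi] with x hx
  exact mul_nonneg (rpow_nonneg (le_of_lt hx) _) (exp_nonneg _)

theorem lintegral_rpow_mul_exp_neg_mul_Ioi {s c : ℝ} (hs : 0 < s) (hc : 0 < c) :
    ∫⁻ x in Ioi (0 : ℝ), ENNReal.ofReal (x ^ (s - 1) * exp (-(c * x))) =
      ENNReal.ofReal ((1 / c) ^ s * Gamma s) := by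
  rw [← ofReal_integral_eq_lintegral_ofReal (integrableOn_rpow_mul_exp_neg_mul_Ioi hs hc)
    (ae_restrict_Ioi_rpow_mul_exp_nonneg s c), integral_rpow_mul_exp_neg_mul_Ioi hs hc]

theorem ofReal_inv_eq_lintegral_exp_neg_mul {c : ℝ} (hc : 0 < c) :
    ENNReal.ofReal c⁻¹ = ∫⁻ t in Ioi (0 : ℝ), ENNReal.ofReal (exp (-(c * t))) := by
  simpa using (lintegral_rpow_mul_exp_neg_mul_Ioi one_pos hc).symm

theorem lintegral_ofReal_prod_eq_ofReal_prod_integral {ι E : Type*} [Fintype ι]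
    [MeasurableSpace E] {μ : ι → Measure E} [∀ i, SigmaFinite (μ i)] {f : ι → E → ℝ}
    (hf : ∀ i, Integrable (f i) (μ i)) (hf_nonneg : ∀ i, 0 ≤ᵐ[μ i] f i) :
    ∫⁻ x, ENNReal.ofReal (∏ i, f i (x i)) ∂Measure.pi μ =
      ENNReal.ofReal (∏ i, ∫ x, f i x ∂μ i) := by
  have h_nonneg : 0 ≤ᵐ[Measure.pi μ] fun x => ∏ i, f i (x i) := by
    have : ∀ᵐ x ∂Measure.pi μ, ∀ i, 0 ≤ f i (x i) :=
      ae_all_iff.2 fun i => Measure.tendsto_eval_ae_ae.eventually (hf_nonneg i)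
    filter_upwards [this] with x hx using prod_nonneg fun i _ => hx i
  rw [← ofReal_integral_eq_lintegral_ofReal (Integrable.fintype_prod hf) h_nonneg,
    integral_fintype_prod_eq_prod]

theorem setLIntegral_univ_pi_Ioi_prod_rpow_mul_exp_neg_mul {ι : Type*} [Fintype ι]
    {q r : ι → ℝ} (hq : ∀ i, 0 < q i) (hr : ∀ i, 0 < r i) :
    ∫⁻ u : ι → ℝ in univ.pi fun _ => Ioi 0,
        ENNReal.ofReal (∏ i, u i ^ (q i - 1) * exp (-(r i * u i))) =
      ENNReal.ofReal (∏ i, (1 / r i) ^ q i * Gamma (q i)) := by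
  rw [volume_pi, Measure.restrict_pi_pi, lintegral_ofReal_prod_eq_ofReal_prod_integral
    (fun i => integrableOn_rpow_mul_exp_neg_mul_Ioi (hq i) (hr i))
    (fun i => ae_restrict_Ioi_rpow_mul_exp_nonneg (q i) (r i))]
  simp_rw [integral_rpow_mul_exp_neg_mul_Ioi (hq _) (hr _)]

theorem prod_one_div_mul_rpow_mul {ι : Type*} [Fintype ι] {b q g : ι → ℝ}
    (hb : ∀ i, 0 ≤ b i) {t : ℝ} (ht : 0 < t) :
    ∏ i, (1 / (b i * t)) ^ q i * g i = (1 / t) ^ (∑ i, q i) * ∏ i, (1 / b i) ^ q i * g i := by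
  have h_split (i : ι) :
      (1 / (b i * t)) ^ q i * g i = (1 / t) ^ q i * ((1 / b i) ^ q i * g i) := by
    rw [← one_div_mul_one_div_rev, mul_rpow (one_div_pos.2 ht).le (one_div_nonneg.2 (hb i)),
      mul_assoc]
  rw [prod_congr rfl fun i _ => h_split i, prod_mul_distrib, rpow_sum_of_pos (one_div_pos.2 ht)]

theorem setLIntegral_exp_neg_mul_add_sum_mul_prod_rpow {ι : Type*} [Fintype ι] {b q : ι → ℝ}
    (hb : ∀ i, 0 < b i) (hq : ∀ i, 0 < q i) (c : ℝ) {t : ℝ} (ht : 0 < t) :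
    ∫⁻ u : ι → ℝ in univ.pi fun _ => Ioi 0,
        ENNReal.ofReal (exp (-((c + ∑ i, u i * b i) * t)) * ∏ i, u i ^ (q i - 1)) =
      ENNReal.ofReal (exp (-(c * t)) *
        ((1 / t) ^ (∑ i, q i) * ∏ i, (1 / b i) ^ q i * Gamma (q i))) := by
  have h_factor (u : ι → ℝ) :
      exp (-((c + ∑ i, u i * b i) * t)) * ∏ i, u i ^ (q i - 1) =
        exp (-(c * t)) * ∏ i, u i ^ (q i - 1) * exp (-(b i * t * u i)) := by
    have h_exponent : -((c + ∑ i, u i * b i) * t) = -(c * t) + ∑ i, -(b i * t * u i) := by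
      rw [add_mul, sum_mul, neg_add, ← sum_neg_distrib]
      exact congrArg _ (sum_congr rfl fun i _ => by ring)
    rw [prod_mul_distrib, ← exp_sum, h_exponent, exp_add]
    ring
  simp_rw [h_factor, ENNReal.ofReal_mul (exp_nonneg _)]
  rw [lintegral_const_mul' _ _ ENNReal.ofReal_ne_top,
    setLIntegral_univ_pi_Ioi_prod_rpow_mul_exp_neg_mul hq fun i => mul_pos (hb i) ht,
    prod_one_div_mul_rpow_mul (fun i => (hb i).le) ht]

theorem setLIntegral_inv_add_sum_mul_mul_prod_rpow {ι : Type*} [Fintype ι] {b q : ι → ℝ}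
    (hb : ∀ i, 0 < b i) (hq : ∀ i, 0 < q i) {c s : ℝ} (hc : 0 < c) (hs : 0 < s)
    (hqs : ∑ i, q i = 1 - s) :
    ∫⁻ u : ι → ℝ in univ.pi fun _ => Ioi 0,
        ENNReal.ofReal ((c + ∑ i, u i * b i)⁻¹ * ∏ i, u i ^ (q i - 1)) =
      ENNReal.ofReal ((1 / c) ^ s * Gamma s * ∏ i, (1 / b i) ^ q i * Gamma (q i)) := by
  set P := ∏ i, (1 / b i) ^ q i * Gamma (q i)
  have hP : 0 ≤ P := prod_nonneg fun i _ => one_div_rpow_mul_Gamma_nonneg (hb i).le (hq i).le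
  have h_meas : Measurable fun z : (ι → ℝ) × ℝ =>
      ENNReal.ofReal (exp (-((c + ∑ i, z.1 i * b i) * z.2)) * ∏ i, z.1 i ^ (q i - 1)) := by
    fun_prop
  calc _ = ∫⁻ u : ι → ℝ in univ.pi fun _ => Ioi 0, ∫⁻ t in Ioi 0,
        ENNReal.ofReal (exp (-((c + ∑ i, u i * b i) * t)) * ∏ i, u i ^ (q i - 1)) := by
        refine setLIntegral_congr_fun (.univ_pi fun _ => measurableSet_Ioi) fun u hu => ?_
        have hL : 0 < c + ∑ i, u i * b i :=
          add_pos_of_pos_of_nonneg hc (sum_nonneg fun i _ => (mul_pos (hu i trivial) (hb i)).le)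
        simp_rw [ENNReal.ofReal_mul (exp_nonneg _), ENNReal.ofReal_mul (inv_nonneg.2 hL.le),
          ofReal_inv_eq_lintegral_exp_neg_mul hL]
        exact (lintegral_mul_const' _ _ ENNReal.ofReal_ne_top).symm
    _ = ∫⁻ t in Ioi 0, ∫⁻ u : ι → ℝ in univ.pi fun _ => Ioi 0,
        ENNReal.ofReal (exp (-((c + ∑ i, u i * b i) * t)) * ∏ i, u i ^ (q i - 1)) :=
        lintegral_lintegral_swap h_meas.aemeasurable
    _ = ∫⁻ t in Ioi 0, ENNReal.ofReal P * ENNReal.ofReal (t ^ (s - 1) * exp (-(c * t))) := by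
        refine setLIntegral_congr_fun measurableSet_Ioi fun t ht => ?_
        have h_pow : (1 / t) ^ (∑ i, q i) = t ^ (s - 1) := by
          rw [hqs, one_div, inv_rpow (le_of_lt ht), ← rpow_neg (le_of_lt ht), neg_sub]
        rw [setLIntegral_exp_neg_mul_add_sum_mul_prod_rpow hb hq c ht, h_pow,
          ← ENNReal.ofReal_mul hP]
        congr 1
        ring
    _ = _ := by
        rw [lintegral_const_mul' _ _ ENNReal.ofReal_ne_top,
          lintegral_rpow_mul_exp_neg_mul_Ioi hs hc, ← ENNReal.ofReal_mul hP, mul_comm]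

theorem setIntegral_inv_add_sum_mul_mul_prod_rpow {ι : Type*} [Fintype ι] {b q : ι → ℝ}
    (hb : ∀ i, 0 < b i) (hq : ∀ i, 0 < q i) {c s : ℝ} (hc : 0 < c) (hs : 0 < s)
    (hqs : ∑ i, q i = 1 - s) :
    ∫ u : ι → ℝ in univ.pi fun _ => Ioi 0, (c + ∑ i, u i * b i)⁻¹ * ∏ i, u i ^ (q i - 1) =
      (1 / c) ^ s * Gamma s * ∏ i, (1 / b i) ^ q i * Gamma (q i) := by
  have h_nonneg : 0 ≤ᵐ[volume.restrict (univ.pi fun _ => Ioi 0)]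
      fun u : ι → ℝ => (c + ∑ i, u i * b i)⁻¹ * ∏ i, u i ^ (q i - 1) := by
    filter_upwards [self_mem_ae_restrict (.univ_pi fun _ => measurableSet_Ioi)] with u hu
    have hu_pos (i : ι) : 0 < u i := hu i trivial
    exact mul_nonneg (inv_nonneg.2 (add_nonneg hc.le (sum_nonneg fun i _ =>
      (mul_pos (hu_pos i) (hb i)).le))) (prod_nonneg fun i _ => rpow_nonneg (hu_pos i).le _)
  rw [integral_eq_lintegral_of_nonneg_ae h_nonneg (by fun_prop),
    setLIntegral_inv_add_sum_mul_mul_prod_rpow hb hq hc hs hqs, ENNReal.toReal_ofReal]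
  exact mul_nonneg (one_div_rpow_mul_Gamma_nonneg hc.le hs.le)
    (prod_nonneg fun i _ => one_div_rpow_mul_Gamma_nonneg (hb i).le (hq i).le)

/-- Integral representation of products of fractional powers: for positive reals `a₁, …, a_k`
and positive exponents summing to one,
`∏ a_j ^ p_j = C⁻¹ ∫_{(0,∞)^{k-1}} (a₁⁻¹ + Σ_{j≥2} u_j a_j⁻¹)⁻¹ ∏_{j≥2} u_j^{p_j-1} du`,
with `C = ∏ Γ(p_j)`. -/
theorem fractional_power_integral_representation {m : ℕ} (a p : Fin (m + 1) → ℝ)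
    (ha : ∀ j, 0 < a j) (hp : ∀ j, 0 < p j) (hsum : ∑ j, p j = 1) :
    ∏ j, a j ^ p j =
      (∏ j, Real.Gamma (p j))⁻¹ *
        ∫ u : Fin m → ℝ in Set.univ.pi (fun _ => Set.Ioi (0 : ℝ)),
          ((a 0)⁻¹ + ∑ j, u j * (a j.succ)⁻¹)⁻¹ * ∏ j, u j ^ (p j.succ - 1) := by
  have hp_tail : ∑ j : Fin m, p j.succ = 1 - p 0 := by
    rw [Fin.sum_univ_succ] at hsum
    linarith
  rw [setIntegral_inv_add_sum_mul_mul_prod_rpow (ι := Fin m) (b := fun j => (a j.succ)⁻¹)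
    (fun j => inv_pos.2 (ha j.succ)) (fun j => hp j.succ) (inv_pos.2 (ha 0)) (hp 0) hp_tail]
  have hΓ (j : Fin (m + 1)) : Gamma (p j) ≠ 0 := (Gamma_pos_of_pos (hp j)).ne'
  have hΓ_head : Gamma (p 0) ≠ 0 := hΓ 0
  have hΓ_tail : ∏ j : Fin m, Gamma (p j.succ) ≠ 0 := prod_ne_zero_iff.2 fun j _ => hΓ j.succ
  simp only [one_div, inv_inv, Fin.prod_univ_succ, prod_mul_distrib]
  field_simp
end

section
/- Subadditivity of von Neumann entropy: for any density matrix ρ₁₂ on a tensor product H₁ ⊗ H₂ of finite-dimensional Hilbert spaces, S(ρ₁₂) ≤ S(ρ₁) + S(ρ₂), where ρ₁, ρ₂ are the partial traces of ρ₁₂. -/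
open Matrix ComplexOrder Finset

/-- The von Neumann entropy `S(ρ) = -Tr[ρ log ρ]` (with the convention `0 log 0 = 0`). -/
noncomputable def vnEntropy {n : Type*} [Fintype n] [DecidableEq n]
    (ρ : Matrix n n ℂ) : ℝ :=
  -(Matrix.trace (ρ * matFun Real.log ρ)).re

/-- Partial trace over the second tensor factor. -/
noncomputable def ptraceRight {α β : Type*} [Fintype β]
    (ρ : Matrix (α × β) (α × β) ℂ) : Matrix α α ℂ :=
  Matrix.of fun i j => ∑ k, ρ (i, k) (j, k)

/-- Partial trace over the first tensor factor. -/
noncomputable def ptraceLeft {α β : Type*} [Fintype α]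
    (ρ : Matrix (α × β) (α × β) ℂ) : Matrix β β ℂ :=
  Matrix.of fun i j => ∑ k, ρ (k, i) (k, j)

/-! Let `V`, `W` be eigenbases of `ρ₁`, `ρ₂` and let `d` be the diagonal of `ρ` in the product
basis `V ⊗ W`. In any orthonormal basis, the diagonal of a state is the image of its spectrum
under the doubly stochastic matrix `|⟨uᵢ, xⱼ⟩|²`, so concavity of `η(t) = -t log t` gives
`S(ρ) ≤ H(d)`; here `uᵢ` is an eigenbasis of `ρ`. The marginals `d₁`, `d₂` of the probability
vector `d` are the spectra of `ρ₁` and `ρ₂`, and classical subadditivity `H(d) ≤ H(d₁) + H(d₂)`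
(Gibbs' inequality against `d₁ ⊗ d₂`) concludes. -/

open Real
open scoped Kronecker

theorem mul_log_le_mul_log_add_sub {s t : ℝ} (hs : 0 ≤ s) (ht : 0 < t) :
    s * log t ≤ s * log s + t - s := by
  rcases hs.eq_or_lt with rfl | hs
  · simp only [zero_mul, sub_zero]; linarith
  · have h := mul_le_mul_of_nonneg_left (log_le_sub_one_of_pos (div_pos ht hs)) hs.le
    rw [log_div ht.ne' hs.ne', mul_sub, mul_sub, mul_div_cancel₀ _ hs.ne'] at h
    linarith

theorem sum_negMulLog_le_sum_negMulLog_vecMul {ι : Type*} [Fintype ι] [DecidableEq ι]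
    {M : Matrix ι ι ℝ} (hM : M ∈ doublyStochastic ℝ ι) {p : ι → ℝ} (hp : 0 ≤ p) :
    ∑ i, negMulLog (p i) ≤ ∑ j, negMulLog ((p ᵥ* M) j) := by
  have jensen (j : ι) : ∑ i, M i j * negMulLog (p i) ≤ negMulLog ((p ᵥ* M) j) := by
    have := concaveOn_negMulLog.le_map_sum (fun i _ => nonneg_of_mem_doublyStochastic hM)
      (sum_col_of_mem_doublyStochastic hM j) (fun i _ => Set.mem_Ici.mpr (hp i))
    simpa only [smul_eq_mul, vecMul, dotProduct, mul_comm] using this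
  calc ∑ i, negMulLog (p i) = ∑ j, ∑ i, M i j * negMulLog (p i) := by
        rw [sum_comm]
        simp_rw [← sum_mul, sum_row_of_mem_doublyStochastic hM, one_mul]
    _ ≤ _ := sum_le_sum fun j _ => jensen j

theorem sum_negMulLog_le_add_marginals {α β : Type*} [Fintype α] [Fintype β]
    {s : α × β → ℝ} (hs : 0 ≤ s) (hs1 : ∑ x, s x = 1) :
    ∑ x, negMulLog (s x) ≤ ∑ a, negMulLog (∑ b, s (a, b)) + ∑ b, negMulLog (∑ a, s (a, b)) := by
  set q := fun a => ∑ b, s (a, b)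
  set r := fun b => ∑ a, s (a, b)
  have hq (a : α) (b : β) : s (a, b) ≤ q a :=
    single_le_sum (f := fun b => s (a, b)) (fun b _ => hs _) (mem_univ b)
  have hr (a : α) (b : β) : s (a, b) ≤ r b :=
    single_le_sum (f := fun a => s (a, b)) (fun a _ => hs _) (mem_univ a)
  have gibbs (x : α × β) :
      s x * log (q x.1) + s x * log (r x.2) ≤ s x * log (s x) + q x.1 * r x.2 - s x := by
    rcases (hs x).eq_or_lt with h | h
    · rw [← h, Pi.zero_apply]
      simp only [zero_mul, add_zero, log_zero, mul_zero, zero_add, sub_zero]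
      exact mul_nonneg ((hs x).trans (hq x.1 x.2)) ((hs x).trans (hr x.1 x.2))
    · have hq0 := h.trans_le (hq x.1 x.2)
      have hr0 := h.trans_le (hr x.1 x.2)
      rw [← mul_add, ← log_mul hq0.ne' hr0.ne']
      exact mul_log_le_mul_log_add_sub h.le (mul_pos hq0 hr0)
  have hq_entropy : ∑ a, negMulLog (q a) = -∑ x, s x * log (q x.1) := by
    simp only [negMulLog, q, Fintype.sum_prod_type, sum_mul, neg_mul, sum_neg_distrib]
  have hr_entropy : ∑ b, negMulLog (r b) = -∑ x, s x * log (r x.2) := by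
    simp only [negMulLog, r, Fintype.sum_prod_type_right, sum_mul, neg_mul, sum_neg_distrib]
  have hqr : ∑ x : α × β, q x.1 * r x.2 = 1 := by
    rw [Fintype.sum_prod_type, ← sum_mul_sum]
    simp only [q, r, ← Fintype.sum_prod_type, ← Fintype.sum_prod_type_right, hs1, one_mul]
  have := sum_le_sum fun x (_ : x ∈ univ) => gibbs x
  simp only [sum_add_distrib, sum_sub_distrib, hqr, hs1] at this
  rw [hq_entropy, hr_entropy]
  simp only [negMulLog, neg_mul, sum_neg_distrib]
  linarith

section Diagonal

variable {ι : Type*} [Fintype ι] [DecidableEq ι]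

theorem map_normSq_mem_doublyStochastic {U : Matrix ι ι ℂ} (hU : U ∈ unitaryGroup ι ℂ) :
    U.map Complex.normSq ∈ doublyStochastic ℝ ι := by
  refine mem_doublyStochastic_iff_sum.mpr
    ⟨fun i j => Complex.normSq_nonneg _, fun i => ?_, fun j => ?_⟩
  · have h := congr_fun₂ (mem_unitaryGroup_iff.mp hU) i i
    simp only [mul_apply, star_apply, Complex.star_def, Complex.mul_conj, one_apply_eq] at h
    exact_mod_cast h
  · have h := congr_fun₂ (mem_unitaryGroup_iff'.mp hU) j j
    simp only [mul_apply, star_apply, Complex.star_def, mul_comm _ (U _ j), Complex.mul_conj,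
      one_apply_eq] at h
    exact_mod_cast h

theorem conjTranspose_mul_diagonal_mul_apply_self {κ : Type*} (C : Matrix ι κ ℂ) (d : ι → ℝ)
    (j : κ) :
    (Cᴴ * diagonal (fun i => (d i : ℂ)) * C) j j = ((d ᵥ* C.map Complex.normSq) j : ℂ) := by
  rw [mul_apply]
  simp only [mul_diagonal, conjTranspose_apply, Complex.star_def, vecMul, dotProduct, map_apply]
  push_cast
  refine sum_congr rfl fun i _ => ?_
  rw [← Complex.mul_conj]
  ring

namespace Matrix.IsHermitian

variable {A : Matrix ι ι ℂ} (hA : A.IsHermitian)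
include hA

theorem conjTranspose_mul_mul_apply_self (X : Matrix ι ι ℂ) (j : ι) :
    (Xᴴ * A * X) j j =
      ((hA.eigenvalues ᵥ* ((hA.eigenvectorUnitary : Matrix ι ι ℂ)ᴴ * X).map Complex.normSq) j :
        ℂ) := by
  rw [← conjTranspose_mul_diagonal_mul_apply_self]
  conv_lhs => rw [hA.spectral_theorem]
  simp only [Unitary.conjStarAlgAut_apply, conjTranspose_mul, conjTranspose_conjTranspose,
    star_eq_conjTranspose, Matrix.mul_assoc]
  rfl

theorem conjTranspose_eigenvectorUnitary_mul_mul :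
    (hA.eigenvectorUnitary : Matrix ι ι ℂ)ᴴ * A * hA.eigenvectorUnitary =
      diagonal (fun i => (hA.eigenvalues i : ℂ)) := by
  rw [← star_eq_conjTranspose, ← Unitary.conjStarAlgAut_star_apply (S := ℂ),
    hA.conjStarAlgAut_star_eigenvectorUnitary]
  rfl

theorem vnEntropy_eq_sum_negMulLog : vnEntropy A = ∑ i, negMulLog (hA.eigenvalues i) := by
  rw [vnEntropy, matFun, dif_pos hA, ← Matrix.mul_assoc, ← Matrix.mul_assoc, trace_mul_cycle,
    ← Matrix.mul_assoc, star_eq_conjTranspose, hA.conjTranspose_eigenvectorUnitary_mul_mul,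
    diagonal_mul_diagonal, trace_diagonal]
  simp only [negMulLog, ← Complex.ofReal_mul, ← Complex.ofReal_sum, Complex.ofReal_re, neg_mul,
    sum_neg_distrib]

theorem vnEntropy_eq_sum_negMulLog_diag :
    vnEntropy A = ∑ j, negMulLog
      (((hA.eigenvectorUnitary : Matrix ι ι ℂ)ᴴ * A * hA.eigenvectorUnitary) j j).re := by
  simp [hA.conjTranspose_eigenvectorUnitary_mul_mul, hA.vnEntropy_eq_sum_negMulLog]

end Matrix.IsHermitian

theorem Matrix.PosSemidef.vnEntropy_le_sum_negMulLog_diag {A : Matrix ι ι ℂ} (hA : A.PosSemidef)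
    {X : Matrix ι ι ℂ} (hX : X ∈ unitaryGroup ι ℂ) :
    vnEntropy A ≤ ∑ j, negMulLog ((Xᴴ * A * X) j j).re := by
  simp only [hA.1.conjTranspose_mul_mul_apply_self, Complex.ofReal_re]
  rw [hA.1.vnEntropy_eq_sum_negMulLog]
  refine sum_negMulLog_le_sum_negMulLog_vecMul (map_normSq_mem_doublyStochastic ?_)
    fun i => hA.eigenvalues_nonneg i
  rw [← star_eq_conjTranspose]
  exact mul_mem (Unitary.star_mem hA.1.eigenvectorUnitary.2) hX

theorem trace_conjTranspose_mul_mul_of_mem_unitaryGroup (A : Matrix ι ι ℂ) {X : Matrix ι ι ℂ}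
    (hX : X ∈ unitaryGroup ι ℂ) : (Xᴴ * A * X).trace = A.trace := by
  rw [trace_mul_comm, ← Matrix.mul_assoc, ← star_eq_conjTranspose, mem_unitaryGroup_iff.mp hX,
    Matrix.one_mul]

end Diagonal

section PartialTrace

variable {α β : Type*}

theorem ptraceRight_isHermitian [Fintype β] {ρ : Matrix (α × β) (α × β) ℂ}
    (hρ : ρ.IsHermitian) : (ptraceRight ρ).IsHermitian := by
  ext i j
  simp only [conjTranspose_apply, ptraceRight, of_apply, star_sum]
  exact sum_congr rfl fun k _ => hρ.apply (i, k) (j, k)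

theorem ptraceLeft_isHermitian [Fintype α] {ρ : Matrix (α × β) (α × β) ℂ}
    (hρ : ρ.IsHermitian) : (ptraceLeft ρ).IsHermitian := by
  ext i j
  simp only [conjTranspose_apply, ptraceLeft, of_apply, star_sum]
  exact sum_congr rfl fun k _ => hρ.apply (k, i) (k, j)

variable [Fintype α] [Fintype β]

theorem ptraceRight_kronecker_conj [DecidableEq β] (A B : Matrix α α ℂ) {W : Matrix β β ℂ}
    (hW : W * Wᴴ = 1) (ρ : Matrix (α × β) (α × β) ℂ) :
    ptraceRight ((A ⊗ₖ Wᴴ) * ρ * (B ⊗ₖ W)) = A * ptraceRight ρ * B := by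
  have hW' (l l' : β) : ∑ k, W l k * star (W l' k) = if l = l' then 1 else 0 := by
    simpa [mul_apply, one_apply] using congr_fun₂ hW l l'
  ext i j
  calc ∑ k, ((A ⊗ₖ Wᴴ) * ρ * (B ⊗ₖ W)) (i, k) (j, k)
      = ∑ y : α × β, ∑ x : α × β, A i x.1 * ρ x y * B y.1 j * ∑ k, W y.2 k * star (W x.2 k) := by
        simp only [mul_apply, kroneckerMap_apply, conjTranspose_apply, sum_mul, mul_sum]
        rw [sum_comm]
        refine sum_congr rfl fun y _ => ?_
        rw [sum_comm]
        exact sum_congr rfl fun x _ => sum_congr rfl fun k _ => by ring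
    _ = (A * ptraceRight ρ * B) i j := by
        simp only [hW', mul_ite, mul_one, mul_zero, Fintype.sum_prod_type, ptraceRight, mul_apply,
          of_apply, sum_mul, mul_sum]
        refine sum_congr rfl fun y _ => ?_
        rw [sum_comm]
        simp only [sum_ite_eq, mem_univ, if_true]

theorem ptraceLeft_kronecker_conj [DecidableEq α] {V : Matrix α α ℂ} (hV : V * Vᴴ = 1)
    (A B : Matrix β β ℂ) (ρ : Matrix (α × β) (α × β) ℂ) :
    ptraceLeft ((Vᴴ ⊗ₖ A) * ρ * (V ⊗ₖ B)) = A * ptraceLeft ρ * B := by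
  have hV' (l l' : α) : ∑ k, V l k * star (V l' k) = if l = l' then 1 else 0 := by
    simpa [mul_apply, one_apply] using congr_fun₂ hV l l'
  ext i j
  calc ∑ k, ((Vᴴ ⊗ₖ A) * ρ * (V ⊗ₖ B)) (k, i) (k, j)
      = ∑ y : α × β, ∑ x : α × β, A i x.2 * ρ x y * B y.2 j * ∑ k, V y.1 k * star (V x.1 k) := by
        simp only [mul_apply, kroneckerMap_apply, conjTranspose_apply, sum_mul, mul_sum]
        rw [sum_comm]
        refine sum_congr rfl fun y _ => ?_
        rw [sum_comm]
        exact sum_congr rfl fun x _ => sum_congr rfl fun k _ => by ring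
    _ = (A * ptraceLeft ρ * B) i j := by
        simp only [hV', mul_ite, mul_one, mul_zero, Fintype.sum_prod_type, ptraceLeft, mul_apply,
          of_apply, sum_mul, mul_sum, sum_ite_irrel, sum_const_zero, sum_ite_eq, mem_univ, if_true]
        rw [sum_comm]
        exact sum_congr rfl fun _ _ => sum_comm

end PartialTrace

theorem Matrix.PosSemidef.vnEntropy_le_sum_negMulLog_diag_ptraceRight_add_ptraceLeft
    {α β : Type*} [Fintype α] [Fintype β] [DecidableEq α] [DecidableEq β]
    {ρ : Matrix (α × β) (α × β) ℂ} (hρ : ρ.PosSemidef) (htr : ρ.trace = 1)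
    {V : Matrix α α ℂ} (hV : V ∈ unitaryGroup α ℂ) {W : Matrix β β ℂ} (hW : W ∈ unitaryGroup β ℂ) :
    vnEntropy ρ ≤ ∑ a, negMulLog ((Vᴴ * ptraceRight ρ * V) a a).re +
      ∑ b, negMulLog ((Wᴴ * ptraceLeft ρ * W) b b).re := by
  have hX : V ⊗ₖ W ∈ unitaryGroup _ ℂ := kronecker_mem_unitary hV hW
  set d : α × β → ℝ := fun x => (((V ⊗ₖ W)ᴴ * ρ * (V ⊗ₖ W)) x x).re
  have hd_nonneg : 0 ≤ d := fun x =>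
    (Complex.nonneg_iff.mp (hρ.conjTranspose_mul_mul_same (V ⊗ₖ W)).diag_nonneg).1
  have hd_sum : ∑ x, d x = 1 := by
    have := trace_conjTranspose_mul_mul_of_mem_unitaryGroup ρ hX
    rw [htr] at this
    simpa [trace, Complex.re_sum] using congr_arg Complex.re this
  have hd₁ (a : α) : ∑ b, d (a, b) = ((Vᴴ * ptraceRight ρ * V) a a).re := by
    rw [← ptraceRight_kronecker_conj _ _ (mem_unitaryGroup_iff.mp hW), ← conjTranspose_kronecker]
    simp [d, ptraceRight, Complex.re_sum]
  have hd₂ (b : β) : ∑ a, d (a, b) = ((Wᴴ * ptraceLeft ρ * W) b b).re := by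
    rw [← ptraceLeft_kronecker_conj (mem_unitaryGroup_iff.mp hV), ← conjTranspose_kronecker]
    simp [d, ptraceLeft, Complex.re_sum]
  calc vnEntropy ρ ≤ ∑ x, negMulLog (d x) := hρ.vnEntropy_le_sum_negMulLog_diag hX
    _ ≤ ∑ a, negMulLog (∑ b, d (a, b)) + ∑ b, negMulLog (∑ a, d (a, b)) :=
        sum_negMulLog_le_add_marginals hd_nonneg hd_sum
    _ = _ := by simp only [hd₁, hd₂]

/-- Subadditivity of von Neumann entropy: `S(ρ₁₂) ≤ S(ρ₁) + S(ρ₂)` for any density matrix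
`ρ₁₂` on a tensor product of finite-dimensional Hilbert spaces. -/
theorem entropy_subadditive {m n : ℕ}
    (ρ : Matrix (Fin m × Fin n) (Fin m × Fin n) ℂ)
    (hρ : ρ.PosSemidef) (htr : ρ.trace = 1) :
    vnEntropy ρ ≤ vnEntropy (ptraceRight ρ) + vnEntropy (ptraceLeft ρ) := by
  have h₁ := ptraceRight_isHermitian hρ.1
  have h₂ := ptraceLeft_isHermitian hρ.1
  rw [h₁.vnEntropy_eq_sum_negMulLog_diag, h₂.vnEntropy_eq_sum_negMulLog_diag]
  exact hρ.vnEntropy_le_sum_negMulLog_diag_ptraceRight_add_ptraceLeft htr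
    h₁.eigenvectorUnitary.2 h₂.eigenvectorUnitary.2
end
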